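/- Let α, β > 0, p₁, p₂ ∈ (0,1], x > 0, and let f, g, v₁, v₂, w₁, w₂ be positive integrable functions on [0,x] with 0 < v₁ ≤ f ≤ v₂ and 0 < w₁ ≤ g ≤ w₂ pointwise. Then I^{α,p₁}[v₁v₂](x) · I^{β,p₂}[w₁w₂](x) · I^{α,p₁}[f²](x) · I^{β,p₂}[g²](x) ≤ (1/4)(I^{α,p₁}[v₁f](x) · I^{β,p₂}[w₁g](x) + I^{α,p₁}[v₂f](x) · I^{β,p₂}[w₂g](x))². -/
import Mathlib


open MeasureTheory

/-- Kernel of the generalized proportional fractional (GPF) integral. -/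
noncomputable def gpfKernel (α p x τ : ℝ) : ℝ :=
  Real.exp (((p - 1) / p) * (x - τ)) * (x - τ) ^ (α - 1)

/-- Generalized proportional fractional integral
`I^{α,p}[h](x) = (1/(p^α Γ(α))) ∫₀ˣ e^{((p-1)/p)(x-τ)} (x-τ)^{α-1} h(τ) dτ`. -/
noncomputable def gpf (α p x : ℝ) (h : ℝ → ℝ) : ℝ :=
  (1 / (p ^ α * Real.Gamma α)) * ∫ τ in (0:ℝ)..x, gpfKernel α p x τ * h τ

/-- Integrability of the GPF integrand. -/
def GpfIntegrable (α p x : ℝ) (h : ℝ → ℝ) : Prop :=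
  IntervalIntegrable (fun τ => gpfKernel α p x τ * h τ) volume 0 x

lemma gpfKernel_nonneg {a p x τ : ℝ} (hτ : τ ≤ x) : 0 ≤ gpfKernel a p x τ :=
  mul_nonneg (Real.exp_pos _).le (Real.rpow_nonneg (by linarith) _)

lemma gpf_nonneg {a p x : ℝ} (ha : 0 < a) (hp : 0 < p) (hx : 0 ≤ x) {h : ℝ → ℝ}
    (hh : ∀ τ ∈ Set.Icc (0:ℝ) x, 0 ≤ h τ) : 0 ≤ gpf a p x h := by
  have hg := Real.Gamma_pos_of_pos ha
  apply mul_nonneg (by positivity)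
  apply intervalIntegral.integral_nonneg hx
  intro τ hτ
  exact mul_nonneg (gpfKernel_nonneg hτ.2) (hh τ hτ)

lemma gpf_mono {a p x : ℝ} (ha : 0 < a) (hp : 0 < p) (hx : 0 ≤ x) {h₁ h₂ : ℝ → ℝ}
    (hi₁ : GpfIntegrable a p x h₁) (hi₂ : GpfIntegrable a p x h₂)
    (hle : ∀ τ ∈ Set.Icc (0:ℝ) x, h₁ τ ≤ h₂ τ) : gpf a p x h₁ ≤ gpf a p x h₂ := by
  have hg := Real.Gamma_pos_of_pos ha
  apply mul_le_mul_of_nonneg_left _ (by positivity)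
  apply intervalIntegral.integral_mono_on hx hi₁ hi₂
  intro τ hτ
  exact mul_le_mul_of_nonneg_left (hle τ hτ) (gpfKernel_nonneg hτ.2)

lemma gpf_add {a p x : ℝ} {h₁ h₂ : ℝ → ℝ}
    (hi₁ : GpfIntegrable a p x h₁) (hi₂ : GpfIntegrable a p x h₂) :
    gpf a p x (fun τ => h₁ τ + h₂ τ) = gpf a p x h₁ + gpf a p x h₂ := by
  unfold gpf
  simp only [mul_add]
  rw [intervalIntegral.integral_add hi₁ hi₂]
  ring

lemma gpf_add_integrable {a p x : ℝ} {h₁ h₂ : ℝ → ℝ}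
    (hi₁ : GpfIntegrable a p x h₁) (hi₂ : GpfIntegrable a p x h₂) :
    GpfIntegrable a p x (fun τ => h₁ τ + h₂ τ) := by
  have := hi₁.add hi₂
  unfold GpfIntegrable at *
  simpa [mul_add] using this

set_option maxHeartbeats 1000000 in
theorem gpf_polya_szego_two_param
    (α β p₁ p₂ x : ℝ) (hα : 0 < α) (hβ : 0 < β)
    (hp₁ : p₁ ∈ Set.Ioc (0:ℝ) 1) (hp₂ : p₂ ∈ Set.Ioc (0:ℝ) 1) (hx : 0 < x)
    (f g v₁ v₂ w₁ w₂ : ℝ → ℝ)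
    (hfb : ∀ τ ∈ Set.Icc (0:ℝ) x, 0 < v₁ τ ∧ v₁ τ ≤ f τ ∧ f τ ≤ v₂ τ)
    (hgb : ∀ τ ∈ Set.Icc (0:ℝ) x, 0 < w₁ τ ∧ w₁ τ ≤ g τ ∧ g τ ≤ w₂ τ)
    (h1 : GpfIntegrable α p₁ x (fun τ => v₁ τ * v₂ τ))
    (h2 : GpfIntegrable β p₂ x (fun τ => w₁ τ * w₂ τ))
    (h3 : GpfIntegrable α p₁ x (fun τ => f τ ^ 2))
    (h4 : GpfIntegrable β p₂ x (fun τ => g τ ^ 2))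
    (h5 : GpfIntegrable α p₁ x (fun τ => v₁ τ * f τ))
    (h6 : GpfIntegrable β p₂ x (fun τ => w₁ τ * g τ))
    (h7 : GpfIntegrable α p₁ x (fun τ => v₂ τ * f τ))
    (h8 : GpfIntegrable β p₂ x (fun τ => w₂ τ * g τ)) :
    gpf α p₁ x (fun τ => v₁ τ * v₂ τ) * gpf β p₂ x (fun τ => w₁ τ * w₂ τ) *
      (gpf α p₁ x (fun τ => f τ ^ 2) * gpf β p₂ x (fun τ => g τ ^ 2)) ≤
    (1 / 4) * (gpf α p₁ x (fun τ => v₁ τ * f τ) * gpf β p₂ x (fun τ => w₁ τ * g τ) +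
        gpf α p₁ x (fun τ => v₂ τ * f τ) * gpf β p₂ x (fun τ => w₂ τ * g τ)) ^ 2 := by
  obtain ⟨hp₁0, -⟩ := hp₁
  obtain ⟨hp₂0, -⟩ := hp₂
  set U := gpf α p₁ x (fun τ => v₁ τ * v₂ τ) with hU
  set W := gpf β p₂ x (fun τ => w₁ τ * w₂ τ) with hW
  set V := gpf α p₁ x (fun τ => f τ ^ 2) with hV
  set Z := gpf β p₂ x (fun τ => g τ ^ 2) with hZ
  set A := gpf α p₁ x (fun τ => v₁ τ * f τ) with hA
  set C := gpf β p₂ x (fun τ => w₁ τ * g τ) with hC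
  set B := gpf α p₁ x (fun τ => v₂ τ * f τ) with hB
  set D := gpf β p₂ x (fun τ => w₂ τ * g τ) with hD
  -- nonnegativity
  have hUn : 0 ≤ U := gpf_nonneg hα hp₁0 hx.le fun τ hτ =>
    mul_nonneg (hfb τ hτ).1.le (le_trans (hfb τ hτ).1.le (le_trans (hfb τ hτ).2.1 (hfb τ hτ).2.2))
  have hWn : 0 ≤ W := gpf_nonneg hβ hp₂0 hx.le fun τ hτ =>
    mul_nonneg (hgb τ hτ).1.le (le_trans (hgb τ hτ).1.le (le_trans (hgb τ hτ).2.1 (hgb τ hτ).2.2))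
  have hVn : 0 ≤ V := gpf_nonneg hα hp₁0 hx.le fun τ hτ => sq_nonneg _
  have hZn : 0 ≤ Z := gpf_nonneg hβ hp₂0 hx.le fun τ hτ => sq_nonneg _
  have hAn : 0 ≤ A := gpf_nonneg hα hp₁0 hx.le fun τ hτ =>
    mul_nonneg (hfb τ hτ).1.le (le_trans (hfb τ hτ).1.le (hfb τ hτ).2.1)
  have hCn : 0 ≤ C := gpf_nonneg hβ hp₂0 hx.le fun τ hτ =>
    mul_nonneg (hgb τ hτ).1.le (le_trans (hgb τ hτ).1.le (hgb τ hτ).2.1)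
  have hBn : 0 ≤ B := gpf_nonneg hα hp₁0 hx.le fun τ hτ =>
    mul_nonneg (le_trans (hfb τ hτ).1.le (le_trans (hfb τ hτ).2.1 (hfb τ hτ).2.2))
      (le_trans (hfb τ hτ).1.le (hfb τ hτ).2.1)
  have hDn : 0 ≤ D := gpf_nonneg hβ hp₂0 hx.le fun τ hτ =>
    mul_nonneg (le_trans (hgb τ hτ).1.le (le_trans (hgb τ hτ).2.1 (hgb τ hτ).2.2))
      (le_trans (hgb τ hτ).1.le (hgb τ hτ).2.1)
  -- A ≤ B, C ≤ D
  have hAB : A ≤ B := gpf_mono hα hp₁0 hx.le h5 h7 fun τ hτ =>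
    mul_le_mul_of_nonneg_right (le_trans (hfb τ hτ).2.1 (hfb τ hτ).2.2)
      (le_trans (hfb τ hτ).1.le (hfb τ hτ).2.1)
  have hCD : C ≤ D := gpf_mono hβ hp₂0 hx.le h6 h8 fun τ hτ =>
    mul_le_mul_of_nonneg_right (le_trans (hgb τ hτ).2.1 (hgb τ hτ).2.2)
      (le_trans (hgb τ hτ).1.le (hgb τ hτ).2.1)
  -- key sums
  have key1 : U + V ≤ A + B := by
    have hmono : gpf α p₁ x (fun τ => v₁ τ * v₂ τ + f τ ^ 2) ≤
        gpf α p₁ x (fun τ => v₁ τ * f τ + v₂ τ * f τ) := by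
      apply gpf_mono hα hp₁0 hx.le (gpf_add_integrable h1 h3) (gpf_add_integrable h5 h7)
      intro τ hτ
      obtain ⟨h0, hl, hr⟩ := hfb τ hτ
      nlinarith [mul_nonneg (sub_nonneg.2 hl) (sub_nonneg.2 hr)]
    rwa [gpf_add h1 h3, gpf_add h5 h7] at hmono
  have key2 : W + Z ≤ C + D := by
    have hmono : gpf β p₂ x (fun τ => w₁ τ * w₂ τ + g τ ^ 2) ≤
        gpf β p₂ x (fun τ => w₁ τ * g τ + w₂ τ * g τ) := by
      apply gpf_mono hβ hp₂0 hx.le (gpf_add_integrable h2 h4) (gpf_add_integrable h6 h8)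
      intro τ hτ
      obtain ⟨h0, hl, hr⟩ := hgb τ hτ
      nlinarith [mul_nonneg (sub_nonneg.2 hl) (sub_nonneg.2 hr)]
    rwa [gpf_add h2 h4, gpf_add h6 h8] at hmono
  -- AM-GM steps
  have hUV : U * V ≤ (1/4) * (A + B) ^ 2 := by
    nlinarith [sq_nonneg (U - V), sq_nonneg (U + V)]
  have hWZ : W * Z ≤ (1/4) * (C + D) ^ 2 := by
    nlinarith [sq_nonneg (W - Z), sq_nonneg (W + Z)]
  have hprod : (A + B) * (C + D) ≤ 2 * (A * C + B * D) := by
    nlinarith [mul_nonneg (sub_nonneg.2 hAB) (sub_nonneg.2 hCD)]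
  have h1' : U * V * (W * Z) ≤ (1/4) * (A + B) ^ 2 * ((1/4) * (C + D) ^ 2) :=
    mul_le_mul hUV hWZ (mul_nonneg hWn hZn) (by positivity)
  have h2' : ((A + B) * (C + D)) ^ 2 ≤ (2 * (A * C + B * D)) ^ 2 := by
    apply pow_le_pow_left₀ (by positivity) hprod
  nlinarith [h1', h2']
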